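/- Let d ≥ 2 and define the Werner–Holevo channels Φ₀, Φ₁ on Matrix (Fin d) (Fin d) ℂ by Φ₀(X) = (Tr(X)·1 + Xᵀ)/(d+1) and Φ₁(X) = (Tr(X)·1 − Xᵀ)/(d−1). Then for every finite index type Z, every density operator ρ on (Fin d) × Z, and every pair of PPT operators P₀, P₁ on (Fin d) × Z with P₀ + P₁ = 1: ⟨P₀ − P₁, ((Φ₀ − Φ₁) ⊗ id_Z)(ρ)⟩ ≤ 4/(d+1). (Consequently ‖Φ₀ − Φ₁‖_PPT = ‖Φ₀ − Φ₁‖_LOCC = 4/(d+1), even though ‖Φ₀ − Φ₁‖_⋄ = 2.) -/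

import Mathlib

open Matrix Kronecker BigOperators ComplexOrder

noncomputable def traceNorm {n : Type*} [Fintype n] [DecidableEq n] (A : Matrix n n ℂ) : ℝ :=
  (((Matrix.posSemidef_conjTranspose_mul_self A).1.eigenvectorUnitary : Matrix n n ℂ) *
    Matrix.diagonal (((↑) : ℝ → ℂ) ∘ Real.sqrt ∘ (Matrix.posSemidef_conjTranspose_mul_self A).1.eigenvalues) *
    (star (Matrix.posSemidef_conjTranspose_mul_self A).1.eigenvectorUnitary : Matrix n n ℂ)).trace.re

def IsDensity {n : Type*} [Fintype n] (ρ : Matrix n n ℂ) : Prop :=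
  ρ.PosSemidef ∧ ρ.trace = 1

def tensorId {X Y Z : Type*} (Φ : Matrix X X ℂ → Matrix Y Y ℂ)
    (ρ : Matrix (X × Z) (X × Z) ℂ) : Matrix (Y × Z) (Y × Z) ℂ :=
  Matrix.of fun p q => Φ (Matrix.of fun x x' => ρ (x, p.2) (x', q.2)) p.1 q.1

noncomputable def ChoiMatrix {X Y : Type*} [Fintype X] [DecidableEq X] [Fintype Y]
    (Φ : Matrix X X ℂ → Matrix Y Y ℂ) : Matrix (Y × X) (Y × X) ℂ :=
  ∑ j : X, ∑ k : X, (Φ (Matrix.single j k 1)) ⊗ₖ (Matrix.single j k 1)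

def IsChannel {X Y : Type*} [Fintype X] [DecidableEq X] [Fintype Y]
    (Φ : Matrix X X ℂ →ₗ[ℂ] Matrix Y Y ℂ) : Prop :=
  (∀ M, (Φ M).trace = M.trace) ∧ (ChoiMatrix (⇑Φ)).PosSemidef

def SeparableOp {Y Z : Type*} [Fintype Y] [Fintype Z]
    (P : Matrix (Y × Z) (Y × Z) ℂ) : Prop :=
  ∃ (N : ℕ) (Q : Fin N → Matrix Y Y ℂ) (R : Fin N → Matrix Z Z ℂ),
    (∀ i, (Q i).PosSemidef) ∧ (∀ i, (R i).PosSemidef) ∧ P = ∑ i, Q i ⊗ₖ R i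

def partialTranspose {Y Z : Type*} (M : Matrix (Y × Z) (Y × Z) ℂ) :
    Matrix (Y × Z) (Y × Z) ℂ :=
  Matrix.of fun p q => M (p.1, q.2) (q.1, p.2)

def IsPPT {Y Z : Type*} [Fintype Y] [Fintype Z] (M : Matrix (Y × Z) (Y × Z) ℂ) : Prop :=
  M.PosSemidef ∧ (partialTranspose M).PosSemidef

/-!
The map `T = (Φ₀ - Φ₁) ⊗ id` is self-adjoint for the Hilbert–Schmidt pairing, so the quantity to
bound is `Tr (T(P₀ - P₁) ρ)`. Writing `Γ` for the partial transpose on the first factor and using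
`P₁ = 1 - P₀`, one computes
  `4/(d+1) • 1 - T(P₀ - P₁) = 4/(d+1) • Γ P₁ + 4/(d²-1) • (1 ⊗ Tr₁ P₀ - Γ P₀)`.
The first term is positive semidefinite because `P₁` is PPT, the second because
`X ↦ Tr X • 1 - Xᵀ` is completely positive, with Kraus operators `|i⟩⟨j| - |j⟩⟨i|`.
Hence `T(P₀ - P₁) ≤ 4/(d+1) • 1`, and its expectation in any state is at most `4/(d+1)`.
-/

namespace Matrix

variable {X Z R : Type*}

def partialTraceLeft [Fintype X] [AddCommMonoid R] (M : Matrix (X × Z) (X × Z) R) :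
    Matrix Z Z R :=
  of fun z z' => ∑ x, M (x, z) (x, z')

def partialTransposeLeft (M : Matrix (X × Z) (X × Z) R) : Matrix (X × Z) (X × Z) R :=
  of fun p q => M (q.1, p.2) (p.1, q.2)

def traceTransposeMap [Fintype X] [DecidableEq X] [Semiring R] (a b : R)
    (M : Matrix (X × Z) (X × Z) R) : Matrix (X × Z) (X × Z) R :=
  a • (1 ⊗ₖ partialTraceLeft M) + b • partialTransposeLeft M

lemma _root_.IsPPT.posSemidef_partialTransposeLeft [Fintype X] [Fintype Z]
    {M : Matrix (X × Z) (X × Z) ℂ} (hM : IsPPT M) : (partialTransposeLeft M).PosSemidef :=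
  hM.2.transpose

lemma tensorId_eq_traceTransposeMap [Fintype X] [DecidableEq X] (a b : ℂ)
    (ρ : Matrix (X × Z) (X × Z) ℂ) :
    tensorId (fun M => a • (M.trace • (1 : Matrix X X ℂ)) + b • Mᵀ) ρ
      = traceTransposeMap a b ρ := by
  ext ⟨y, z⟩ ⟨y', z'⟩
  simp [tensorId, traceTransposeMap, partialTraceLeft, partialTransposeLeft, trace,
    one_apply, mul_comm]

section Duality

variable [Fintype X] [Fintype Z]

lemma trace_mul_partialTransposeLeft [NonUnitalNonAssocSemiring R]
    (A B : Matrix (X × Z) (X × Z) R) :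
    (A * partialTransposeLeft B).trace = (partialTransposeLeft A * B).trace := by
  simp only [trace, diag, mul_apply, partialTransposeLeft, of_apply, Fintype.sum_prod_type]
  rw [Finset.sum_comm]
  exact (Finset.sum_congr rfl fun _ _ => Finset.sum_comm).trans Finset.sum_comm

lemma trace_mul_one_kronecker [Semiring R] [DecidableEq X] (A : Matrix (X × Z) (X × Z) R)
    (N : Matrix Z Z R) :
    (A * (1 ⊗ₖ N)).trace = (partialTraceLeft A * N).trace := by
  simp only [trace, diag_apply, mul_apply, kroneckerMap_apply, one_apply, ite_mul, one_mul,
    zero_mul, mul_ite, mul_zero, Fintype.sum_prod_type, Finset.sum_ite_irrel,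
    Finset.sum_const_zero, Finset.sum_ite_eq', Finset.mem_univ, if_true, partialTraceLeft,
    of_apply, Finset.sum_mul]
  rw [Finset.sum_comm]
  exact Finset.sum_congr rfl fun _ _ => Finset.sum_comm

lemma trace_mul_traceTransposeMap [CommSemiring R] [DecidableEq X] (a b : R)
    (A B : Matrix (X × Z) (X × Z) R) :
    (A * traceTransposeMap a b B).trace = (traceTransposeMap a b A * B).trace := by
  rw [traceTransposeMap, traceTransposeMap, mul_add, add_mul, Matrix.mul_smul, Matrix.mul_smul,
    smul_mul, smul_mul, trace_add, trace_add, trace_smul, trace_smul, trace_smul, trace_smul,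
    trace_mul_partialTransposeLeft, trace_mul_one_kronecker, trace_mul_comm (1 ⊗ₖ _),
    trace_mul_one_kronecker, trace_mul_comm (partialTraceLeft B)]

end Duality

section Reduction

variable [Fintype X] [DecidableEq X] [Fintype Z] [DecidableEq Z] [CommRing R]

lemma single_kronecker_one_mul_mul_single_kronecker_one (a b c e : X)
    (M : Matrix (X × Z) (X × Z) R) :
    (single a b 1 ⊗ₖ 1) * M * (single c e 1 ⊗ₖ 1 : Matrix (X × Z) (X × Z) R) =
      of fun p q => if p.1 = a ∧ q.1 = e then M (b, p.2) (c, q.2) else 0 := by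
  ext ⟨y, z⟩ ⟨y', z'⟩
  simp only [single, ite_and, mul_apply, kroneckerMap_apply, of_apply, one_apply, mul_ite,
    mul_one, mul_zero, ite_mul, one_mul, zero_mul, Fintype.sum_prod_type, Finset.sum_ite_eq,
    Finset.mem_univ, if_true, Finset.sum_ite_irrel, Finset.sum_const_zero, eq_comm]
  split_ifs <;> rfl

lemma sum_single_sub_single_kronecker_one_conj (M : Matrix (X × Z) (X × Z) R) :
    ∑ i, ∑ j, ((single i j 1 - single j i 1) ⊗ₖ 1) * M * ((single j i 1 - single i j 1) ⊗ₖ 1)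
      = (2 : R) • (1 ⊗ₖ partialTraceLeft M - partialTransposeLeft M) := by
  have hsub : ∀ i j : X, ((single i j 1 - single j i 1) ⊗ₖ 1 : Matrix (X × Z) (X × Z) R)
      = single i j 1 ⊗ₖ 1 - single j i 1 ⊗ₖ 1 := by
    intro i j; ext; simp [sub_mul]
  simp only [hsub, sub_mul, mul_sub, single_kronecker_one_mul_mul_single_kronecker_one]
  ext ⟨y, z⟩ ⟨y', z'⟩
  simp only [eq_comm, ite_and, of_sub_of, sum_apply, of_apply, Pi.sub_apply,
    Finset.sum_sub_distrib, Finset.sum_ite_irrel, Finset.sum_const_zero, Finset.sum_ite_eq,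
    Finset.mem_univ, if_true, partialTraceLeft, partialTransposeLeft, smul_apply, sub_apply,
    kroneckerMap_apply, one_apply, ite_mul, one_mul, zero_mul, smul_eq_mul]
  ring

end Reduction

lemma smul_one_sub_traceTransposeMap_sub_eq {K : Type*} [Field K] [Fintype X] [DecidableEq X]
    [Fintype Z] [DecidableEq Z] {d : ℕ} (hX : Fintype.card X = d) (hd_add_one : (d : K) + 1 ≠ 0)
    (hd_sub_one : (d : K) - 1 ≠ 0) {P₀ P₁ : Matrix (X × Z) (X × Z) K} (hP : P₀ + P₁ = 1) :
    (4 / ((d : K) + 1)) • 1 - traceTransposeMap (((d : K) + 1)⁻¹ - ((d : K) - 1)⁻¹)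
        (((d : K) + 1)⁻¹ + ((d : K) - 1)⁻¹) (P₀ - P₁)
      = (4 / ((d : K) + 1)) • partialTransposeLeft P₁
        + (4 / ((d : K) ^ 2 - 1)) • (1 ⊗ₖ partialTraceLeft P₀ - partialTransposeLeft P₀) := by
  obtain rfl : P₁ = 1 - P₀ := eq_sub_of_add_eq' hP
  have hd_sq : (d : K) ^ 2 - 1 ≠ 0 := by
    rw [sq, ← one_mul (1 : K), mul_self_sub_mul_self]
    exact mul_ne_zero hd_add_one hd_sub_one
  ext ⟨y, z⟩ ⟨y', z'⟩
  by_cases hy : y = y' <;> by_cases hz : z = z' <;>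
    simp [traceTransposeMap, partialTraceLeft, partialTransposeLeft, one_apply, hX,
      Finset.sum_sub_distrib, hy, hz, eq_comm] <;>
    field_simp <;> ring

section Positivity

variable {𝕜 : Type*} [RCLike 𝕜]

lemma PosSemidef.one_kronecker_partialTraceLeft_sub_partialTransposeLeft [Fintype X]
    [DecidableEq X] [Fintype Z] [DecidableEq Z] {M : Matrix (X × Z) (X × Z) 𝕜}
    (hM : M.PosSemidef) : (1 ⊗ₖ partialTraceLeft M - partialTransposeLeft M).PosSemidef := by
  have h2 : ((2 : 𝕜) • (1 ⊗ₖ partialTraceLeft M - partialTransposeLeft M)).PosSemidef := by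
    rw [← sum_single_sub_single_kronecker_one_conj]
    refine posSemidef_sum _ fun i _ => posSemidef_sum _ fun j _ => ?_
    have hK : ((single i j 1 - single j i 1) ⊗ₖ 1 : Matrix (X × Z) (X × Z) 𝕜)ᴴ
        = (single j i 1 - single i j 1) ⊗ₖ 1 := by
      rw [conjTranspose_kronecker, conjTranspose_sub, conjTranspose_single, conjTranspose_single,
        conjTranspose_one, star_one]
    exact hK ▸ hM.mul_mul_conjTranspose_same ((single i j 1 - single j i 1) ⊗ₖ 1)
  have h2inv : (0 : 𝕜) ≤ 2⁻¹ := (RCLike.inv_pos.2 zero_lt_two).le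
  rw [← inv_smul_smul₀ (two_ne_zero' 𝕜) (1 ⊗ₖ partialTraceLeft M - partialTransposeLeft M)]
  exact h2.smul h2inv

lemma PosSemidef.trace_mul_nonneg {n : Type*} [Fintype n] {A B : Matrix n n 𝕜}
    (hA : A.PosSemidef) (hB : B.PosSemidef) : 0 ≤ (A * B).trace := by
  classical
  open scoped MatrixOrder in
  obtain ⟨C, rfl⟩ := CStarAlgebra.nonneg_iff_eq_star_mul_self.mp hA.nonneg
  rw [star_eq_conjTranspose, Matrix.mul_assoc, trace_mul_comm]
  exact (hB.mul_mul_conjTranspose_same C).trace_nonneg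

lemma re_trace_mul_le_of_posSemidef_smul_one_sub {n : Type*} [Fintype n] [DecidableEq n]
    {H ρ : Matrix n n 𝕜} {c : ℝ} (hH : ((c : 𝕜) • 1 - H).PosSemidef) (hρ : ρ.PosSemidef)
    (htr : ρ.trace = 1) : RCLike.re (H * ρ).trace ≤ c := by
  have h := (RCLike.nonneg_iff.mp (hH.trace_mul_nonneg hρ)).1
  rw [sub_mul, smul_mul, Matrix.one_mul, trace_sub, trace_smul, htr] at h
  simpa using h

lemma posSemidef_smul_one_sub_traceTransposeMap_sub [Fintype X] [DecidableEq X] [Fintype Z]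
    [DecidableEq Z] {d : ℕ} (hX : Fintype.card X = d) (hd : 2 ≤ d)
    {P₀ P₁ : Matrix (X × Z) (X × Z) 𝕜} (hP₀ : P₀.PosSemidef)
    (hP₁ : (partialTransposeLeft P₁).PosSemidef) (hP : P₀ + P₁ = 1) :
    (((4 / ((d : ℝ) + 1) : ℝ) : 𝕜) • 1 - traceTransposeMap (((d : 𝕜) + 1)⁻¹ - ((d : 𝕜) - 1)⁻¹)
      (((d : 𝕜) + 1)⁻¹ + ((d : 𝕜) - 1)⁻¹) (P₀ - P₁)).PosSemidef := by
  have hd_sub_one : (d : 𝕜) - 1 ≠ 0 := sub_ne_zero.2 (Nat.cast_ne_one.2 (by omega))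
  have hd_real : (1 : ℝ) ≤ d := by exact_mod_cast (by omega : 1 ≤ d)
  have h₁ : (0 : 𝕜) ≤ 4 / ((d : 𝕜) + 1) := by
    rw [show (4 : 𝕜) / ((d : 𝕜) + 1) = ((4 / ((d : ℝ) + 1) : ℝ) : 𝕜) by push_cast; ring]
    exact RCLike.ofReal_nonneg.2 (by positivity)
  have h₂ : (0 : 𝕜) ≤ 4 / ((d : 𝕜) ^ 2 - 1) := by
    rw [show (4 : 𝕜) / ((d : 𝕜) ^ 2 - 1) = ((4 / ((d : ℝ) ^ 2 - 1) : ℝ) : 𝕜) by push_cast; ring]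
    exact RCLike.ofReal_nonneg.2 (div_nonneg zero_le_four (by nlinarith))
  push_cast
  rw [smul_one_sub_traceTransposeMap_sub_eq hX (Nat.cast_add_one_ne_zero d) hd_sub_one hP]
  exact (hP₁.smul h₁).add (hP₀.one_kronecker_partialTraceLeft_sub_partialTransposeLeft.smul h₂)

end Positivity

end Matrix

/-- for the Werner–Holevo channels, PPT measurements give correctness at most
that of unentangled strategies: `⟨P₀ - P₁, ((Φ₀ - Φ₁) ⊗ id)(ρ)⟩ ≤ 4/(d+1)`. -/
theorem werner_holevo_ppt_norm_bound
    (d : ℕ) (hd : 2 ≤ d)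
    (Φ₀ Φ₁ : Matrix (Fin d) (Fin d) ℂ → Matrix (Fin d) (Fin d) ℂ)
    (hΦ₀ : ∀ X, Φ₀ X = ((d : ℂ) + 1)⁻¹ • (X.trace • (1 : Matrix (Fin d) (Fin d) ℂ) + Xᵀ))
    (hΦ₁ : ∀ X, Φ₁ X = ((d : ℂ) - 1)⁻¹ • (X.trace • (1 : Matrix (Fin d) (Fin d) ℂ) - Xᵀ))
    (Z : Type*) [Fintype Z] [DecidableEq Z]
    (ρ : Matrix (Fin d × Z) (Fin d × Z) ℂ) (hρ : IsDensity ρ)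
    (P₀ P₁ : Matrix (Fin d × Z) (Fin d × Z) ℂ)
    (hP₀ : IsPPT P₀) (hP₁ : IsPPT P₁) (hmeas : P₀ + P₁ = 1) :
    (((P₀ - P₁)ᴴ * tensorId (fun X => Φ₀ X - Φ₁ X) ρ).trace).re ≤ 4 / ((d : ℝ) + 1) := by
  have hΦ : (fun X => Φ₀ X - Φ₁ X) = fun X : Matrix (Fin d) (Fin d) ℂ =>
      (((d : ℂ) + 1)⁻¹ - ((d : ℂ) - 1)⁻¹) • (X.trace • (1 : Matrix (Fin d) (Fin d) ℂ))
        + (((d : ℂ) + 1)⁻¹ + ((d : ℂ) - 1)⁻¹) • Xᵀ := by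
    funext X
    rw [hΦ₀, hΦ₁]
    module
  rw [(hP₀.1.isHermitian.sub hP₁.1.isHermitian).eq, hΦ, tensorId_eq_traceTransposeMap,
    trace_mul_traceTransposeMap]
  exact re_trace_mul_le_of_posSemidef_smul_one_sub
    (posSemidef_smul_one_sub_traceTransposeMap_sub (Fintype.card_fin d) hd hP₀.1
      hP₁.posSemidef_partialTransposeLeft hmeas) hρ.1 hρ.2
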